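/- arXiv:2010.01360 — 2 statements merged into one kernel-verified Lean document; each statement's English description precedes it below -/
import Mathlib

section
/- One-step descent bound (Lemma 2, deterministic version without delay): under the assumptions that F is L-smooth, h is convex, f̂(·, x_t, ξ_t) is μ-strongly convex and L̂-smooth with ∇f̂(x_t, x_t, ξ_t) = ∇f(x_t, ξ_t), and x_{t+1} = x_t + γ(x̂_t - x_t) with x̂_t the minimizer of h(x) + ρf̂(x, x_t, ξ_t) + (1-ρ)⟨y_t, x⟩ + (1-ρ)(μ/2)‖x - x_t‖² over convex X, then for every η > 0: U(x_{t+1}) - U(x_t) ≤ (γη/2)‖y_{t+1} - ∇F(x_t)‖² + γ(γL/2 + 2/η - μ)‖x̂_t - x_t‖², where U = F + h and y_{t+1} = (1-ρ)y_t + ρ∇f(x_t, ξ_t). -/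
/-
The L-smoothness of `F` bounds `F x_{t+1}` by its first-order model at `x_t` plus
`L γ² ‖d‖² / 2`, where `d = x̂_t - x_t`, and convexity of `h` gives
`h x_{t+1} ≤ (1 - γ) h x_t + γ h x̂_t`. The surrogate objective is `μ`-strongly convex, so its
minimizer `x̂_t` over `X` beats `x_t` by `μ ‖d‖² / 2`; together with the strong-convexity
tangent inequality for `f̂` at `x_t` (where its gradient is `∇f`) this yields
`h x̂_t - h x_t ≤ -⟪y_{t+1}, d⟫ - μ ‖d‖²`. Young's inequality on `⟪∇F x_t - y_{t+1}, d⟫`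
finishes the estimate.
-/

open Set Filter Topology AffineMap
open scoped RealInnerProductSpace

variable {E : Type*} [NormedAddCommGroup E] [InnerProductSpace ℝ E]

lemma real_inner_le_young (a b : E) {η : ℝ} (hη : 0 < η) :
    ⟪a, b⟫ ≤ η / 2 * ‖a‖ ^ 2 + 1 / (2 * η) * ‖b‖ ^ 2 := by
  have hsq : η / 2 * ‖a‖ ^ 2 + 1 / (2 * η) * ‖b‖ ^ 2 - ‖a‖ * ‖b‖
      = (η * ‖a‖ - ‖b‖) ^ 2 / (2 * η) := by
    field_simp
    ring
  have hamgm : ‖a‖ * ‖b‖ ≤ η / 2 * ‖a‖ ^ 2 + 1 / (2 * η) * ‖b‖ ^ 2 := by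
    rw [← sub_nonneg, hsq]
    positivity
  exact (real_inner_le_norm a b).trans hamgm

lemma StrongConvexOn.add_sq_le_of_isMinOn {s : Set E} {m : ℝ} {f : E → ℝ} {x y : E}
    (hf : StrongConvexOn s m f) (hmin : IsMinOn f s x) (hx : x ∈ s) (hy : y ∈ s) :
    f x + m / 2 * ‖y - x‖ ^ 2 ≤ f y := by
  set c := m / 2 * ‖y - x‖ ^ 2
  have hnear : ∀ t ∈ Ioo (0 : ℝ) 1, f x + (1 - t) * c ≤ f y := by
    rintro t ⟨ht0, ht1⟩
    have hmem := hf.1 hx hy (sub_nonneg.2 ht1.le) ht0.le (sub_add_cancel 1 t)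
    have hcomb := hf.2 hx hy (sub_nonneg.2 ht1.le) ht0.le (sub_add_cancel 1 t)
    have hfx : f x ≤ f ((1 - t) • x + t • y) := hmin hmem
    simp only [smul_eq_mul, norm_sub_rev x y] at hcomb
    refine le_of_mul_le_mul_left ?_ ht0
    linear_combination hfx + hcomb
  have hlim : Tendsto (fun t : ℝ ↦ f x + (1 - t) * c) (𝓝[>] 0) (𝓝 (f x + c)) := by
    have hcont : Continuous fun t : ℝ ↦ f x + (1 - t) * c := by fun_prop
    simpa using (hcont.tendsto 0).mono_left nhdsWithin_le_nhds
  exact le_of_tendsto hlim (eventually_of_mem (Ioo_mem_nhdsGT one_pos) hnear)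

/-- The objective minimized by `x̂_t`, with `y = y_t` and `z = x_t`. -/
noncomputable def surrogateObjective (h f : E → ℝ) (ρ μ : ℝ) (y z u : E) : ℝ :=
  h u + ρ * f u + (1 - ρ) * ⟪y, u⟫ + (1 - ρ) * (μ / 2) * ‖u - z‖ ^ 2

lemma strongConvexOn_surrogateObjective {s : Set E} {h f : E → ℝ} {ρ μ : ℝ} (y z : E)
    (hh : ConvexOn ℝ s h) (hf : StrongConvexOn s μ f) (hρ : 0 ≤ ρ) :
    StrongConvexOn s μ (surrogateObjective h f ρ μ y z) := by
  rw [strongConvexOn_iff_convex] at hf ⊢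
  have haffine : ConvexOn ℝ s fun u ↦
      ⟪(1 - ρ) • y - ((1 - ρ) * μ) • z, u⟫ + (1 - ρ) * (μ / 2) * ‖z‖ ^ 2 :=
    ((innerₛₗ ℝ _).convexOn hh.1).add_const _
  have hsplit : (fun u ↦ surrogateObjective h f ρ μ y z u - μ / 2 * ‖u‖ ^ 2) =
      h + ρ • (fun u ↦ f u - μ / 2 * ‖u‖ ^ 2) + fun u ↦
        ⟪(1 - ρ) • y - ((1 - ρ) * μ) • z, u⟫ + (1 - ρ) * (μ / 2) * ‖z‖ ^ 2 := by
    funext u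
    simp only [surrogateObjective, Pi.add_apply, Pi.smul_apply, smul_eq_mul, norm_sub_sq_real,
      inner_sub_left, real_inner_smul_left, real_inner_comm z u]
    ring
  rw [hsplit]
  exact (hh.add (hf.smul hρ)).add haffine

section Gradient

variable [CompleteSpace E]

lemma HasGradientAt.hasDerivAt_comp_lineMap {f : E → ℝ} {g x y : E} {t : ℝ}
    (hf : HasGradientAt f g (lineMap x y t)) :
    HasDerivAt (f ∘ lineMap x y) ⟪g, y - x⟫ t := by
  simpa using hf.hasFDerivAt.comp_hasDerivAt t hasDerivAt_lineMap

lemma StrongConvexOn.add_inner_add_sq_le_of_hasGradientAt {f : E → ℝ} {s : Set E} {m : ℝ}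
    {g x y : E} (hf : StrongConvexOn s m f) (hx : x ∈ s) (hy : y ∈ s) (hg : HasGradientAt f g x) :
    f x + ⟪g, y - x⟫ + m / 2 * ‖y - x‖ ^ 2 ≤ f y := by
  set ψ : ℝ → ℝ := fun t ↦ f (lineMap x y t) - m / 2 * ‖lineMap x y t‖ ^ 2
  have hψ : ConvexOn ℝ (lineMap x y ⁻¹' s) ψ :=
    (strongConvexOn_iff_convex.mp hf).comp_affineMap (lineMap x y)
  have hderiv : HasDerivAt ψ (⟪g, y - x⟫ - m / 2 * (2 * ⟪x, y - x⟫)) 0 := by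
    have hg0 : HasGradientAt f g (lineMap x y (0 : ℝ)) := by rwa [lineMap_apply_zero]
    have hline : HasDerivAt (lineMap x y) (y - x) (0 : ℝ) := hasDerivAt_lineMap
    have := hg0.hasDerivAt_comp_lineMap.sub (hline.norm_sq.const_mul (m / 2))
    rwa [lineMap_apply_zero] at this
  -- a convex function of one variable lies above its tangent line
  have hslope := hψ.le_slope_of_hasDerivAt (x := 0) (y := 1) (by simpa using hx)
    (by simpa using hy) zero_lt_one hderiv
  simp only [slope_def_field, ψ, lineMap_apply_zero, lineMap_apply_one, sub_zero, div_one]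
    at hslope
  have hexpand : ‖y‖ ^ 2 = ‖x‖ ^ 2 + 2 * ⟪x, y - x⟫ + ‖y - x‖ ^ 2 := by
    rw [← norm_add_sq_real, add_sub_cancel]
  linear_combination hslope - m / 2 * hexpand

lemma le_add_inner_add_sq_of_lipschitz_gradient {f : E → ℝ} {f' : E → E} {L : ℝ}
    (hf : ∀ x, HasGradientAt f (f' x) x) (hL : ∀ x y, ‖f' x - f' y‖ ≤ L * ‖x - y‖) (x y : E) :
    f y ≤ f x + ⟪f' x, y - x⟫ + L / 2 * ‖y - x‖ ^ 2 := by
  set d := y - x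
  have hψ : ∀ t, HasDerivAt (f ∘ lineMap x y) ⟪f' (lineMap x y t), d⟫ t :=
    fun t ↦ (hf _).hasDerivAt_comp_lineMap
  set B : ℝ → ℝ := fun t ↦ f x + t * ⟪f' x, d⟫ + L / 2 * t ^ 2 * ‖d‖ ^ 2
  have hB : ∀ t, HasDerivAt B (⟪f' x, d⟫ + L * t * ‖d‖ ^ 2) t := by
    intro t
    have := (((hasDerivAt_id t).mul_const ⟪f' x, d⟫).const_add (f x)).add
      (((hasDerivAt_pow 2 t).const_mul (L / 2)).mul_const (‖d‖ ^ 2))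
    refine this.congr_deriv ?_
    push_cast
    ring
  have hbound : ∀ t ∈ Ico (0 : ℝ) 1,
      ⟪f' (lineMap x y t), d⟫ ≤ ⟪f' x, d⟫ + L * t * ‖d‖ ^ 2 := by
    rintro t ⟨ht0, -⟩
    calc ⟪f' (lineMap x y t), d⟫ = ⟪f' x, d⟫ + ⟪f' (lineMap x y t) - f' x, d⟫ := by
          rw [inner_sub_left]; ring
      _ ≤ ⟪f' x, d⟫ + L * ‖lineMap x y t - x‖ * ‖d‖ := by
          gcongr
          exact (real_inner_le_norm _ _).trans (by gcongr; exact hL _ _)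
      _ = ⟪f' x, d⟫ + L * t * ‖d‖ ^ 2 := by
          rw [lineMap_apply_module', add_sub_cancel_right, norm_smul, Real.norm_of_nonneg ht0]
          ring
  have := image_le_of_deriv_right_le_deriv_boundary
    (fun t _ ↦ (hψ t).continuousAt.continuousWithinAt) (fun t _ ↦ (hψ t).hasDerivWithinAt)
    (by simp [B]) (fun t _ ↦ (hB t).continuousAt.continuousWithinAt)
    (fun t _ ↦ (hB t).hasDerivWithinAt) hbound (right_mem_Icc.2 zero_le_one)
  simpa [B] using this

lemma sub_le_of_isMinOn_surrogateObjective {X : Set E} {h f : E → ℝ}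
    {ρ μ : ℝ} {y z x g : E} (hh : ConvexOn ℝ X h) (hf : StrongConvexOn X μ f) (hρ : 0 ≤ ρ)
    (hg : HasGradientAt f g z) (hmin : IsMinOn (surrogateObjective h f ρ μ y z) X x)
    (hz : z ∈ X) (hx : x ∈ X) :
    h x - h z ≤ -⟪(1 - ρ) • y + ρ • g, x - z⟫ - μ * ‖x - z‖ ^ 2 := by
  have hgrowth := (strongConvexOn_surrogateObjective y z hh hf hρ).add_sq_le_of_isMinOn hmin hx hz
  have htangent := hf.add_inner_add_sq_le_of_hasGradientAt hz hx hg
  simp only [surrogateObjective, sub_self, norm_zero, norm_sub_rev z x] at hgrowth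
  rw [inner_add_left, real_inner_smul_left, real_inner_smul_left, inner_sub_right]
  linear_combination hgrowth + ρ * htangent

end Gradient

theorem one_step_descent_bound_general
    {n : ℕ} (L μ ρ γ η : ℝ)
    (hρ0 : 0 < ρ)
    (hγ0 : 0 < γ) (hγ1 : γ ≤ 1) (hη : 0 < η)
    (F h fhat : EuclideanSpace ℝ (Fin n) → ℝ)
    (gF gfhat : EuclideanSpace ℝ (Fin n) → EuclideanSpace ℝ (Fin n))
    (hFdiff : ∀ x, HasGradientAt F (gF x) x)
    (hFLip : ∀ x y, ‖gF x - gF y‖ ≤ L * ‖x - y‖)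
    (hconv : ConvexOn ℝ Set.univ h)
    (hfdiff : ∀ x, HasGradientAt fhat (gfhat x) x)
    (hfsc : ConvexOn ℝ Set.univ (fun x => fhat x - (μ / 2) * ‖x‖ ^ 2))
    (X : Set (EuclideanSpace ℝ (Fin n))) (hX : Convex ℝ X)
    (xt xhat yt g : EuclideanSpace ℝ (Fin n))
    (hxtX : xt ∈ X) (hxhatX : xhat ∈ X)
    (htangent : gfhat xt = g)
    (hmin : ∀ u ∈ X,
      h xhat + ρ * fhat xhat + (1 - ρ) * inner ℝ yt xhat
          + (1 - ρ) * (μ / 2) * ‖xhat - xt‖ ^ 2 ≤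
        h u + ρ * fhat u + (1 - ρ) * inner ℝ yt u
          + (1 - ρ) * (μ / 2) * ‖u - xt‖ ^ 2) :
    (F (xt + γ • (xhat - xt)) + h (xt + γ • (xhat - xt))) - (F xt + h xt) ≤
      (γ * η / 2) * ‖((1 - ρ) • yt + ρ • g) - gF xt‖ ^ 2 +
        γ * (γ * L / 2 + 2 / η - μ) * ‖xhat - xt‖ ^ 2 := by
  set d := xhat - xt
  set w := (1 - ρ) • yt + ρ • g
  have hprox : h xhat - h xt ≤ -⟪w, d⟫ - μ * ‖d‖ ^ 2 :=
    sub_le_of_isMinOn_surrogateObjective (hconv.subset (subset_univ X) hX)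
      (strongConvexOn_iff_convex.2 (hfsc.subset (subset_univ X) hX)) hρ0.le
      (htangent ▸ hfdiff xt) hmin hxtX hxhatX
  have hF : F (xt + γ • d) ≤ F xt + γ * ⟪gF xt, d⟫ + L / 2 * γ ^ 2 * ‖d‖ ^ 2 := by
    have := le_add_inner_add_sq_of_lipschitz_gradient hFdiff hFLip xt (xt + γ • d)
    rwa [add_sub_cancel_left, real_inner_smul_right, norm_smul, Real.norm_of_nonneg hγ0.le,
      mul_pow, ← mul_assoc] at this
  have hh : h (xt + γ • d) ≤ (1 - γ) * h xt + γ * h xhat := by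
    have := hconv.2 (mem_univ xt) (mem_univ xhat) (sub_nonneg.2 hγ1) hγ0.le (sub_add_cancel 1 γ)
    rwa [smul_eq_mul, smul_eq_mul, show (1 - γ) • xt + γ • xhat = xt + γ • d by module] at this
  have hyoung := real_inner_le_young (gF xt - w) d hη
  rw [inner_sub_left, norm_sub_rev] at hyoung
  have hη2 : 1 / (2 * η) ≤ 2 / η := by
    rw [div_le_div_iff₀ (by positivity) hη]
    linarith
  have hη2d : 1 / (2 * η) * ‖d‖ ^ 2 ≤ 2 / η * ‖d‖ ^ 2 := by gcongr
  linear_combination hF + hh + γ * hprox + γ * hyoung + γ * hη2d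

theorem one_step_descent_bound
    {n : ℕ} (L Lhat μ ρ γ η : ℝ)
    (hμ : 0 < μ) (hρ0 : 0 < ρ) (hρ1 : ρ ≤ 1)
    (hγ0 : 0 < γ) (hγ1 : γ ≤ 1) (hη : 0 < η)
    (F h fhat : EuclideanSpace ℝ (Fin n) → ℝ)
    (gF gfhat : EuclideanSpace ℝ (Fin n) → EuclideanSpace ℝ (Fin n))
    (hFdiff : ∀ x, HasGradientAt F (gF x) x)
    (hFLip : ∀ x y, ‖gF x - gF y‖ ≤ L * ‖x - y‖)
    (hconv : ConvexOn ℝ Set.univ h)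
    (hfdiff : ∀ x, HasGradientAt fhat (gfhat x) x)
    (hfsc : ConvexOn ℝ Set.univ (fun x => fhat x - (μ / 2) * ‖x‖ ^ 2))
    (hfLip : ∀ x y, ‖gfhat x - gfhat y‖ ≤ Lhat * ‖x - y‖)
    (X : Set (EuclideanSpace ℝ (Fin n))) (hX : Convex ℝ X)
    (xt xhat yt g : EuclideanSpace ℝ (Fin n))
    (hxtX : xt ∈ X) (hxhatX : xhat ∈ X)
    (htangent : gfhat xt = g)
    (hmin : ∀ u ∈ X,
      h xhat + ρ * fhat xhat + (1 - ρ) * inner ℝ yt xhat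
          + (1 - ρ) * (μ / 2) * ‖xhat - xt‖ ^ 2 ≤
        h u + ρ * fhat u + (1 - ρ) * inner ℝ yt u
          + (1 - ρ) * (μ / 2) * ‖u - xt‖ ^ 2) :
    (F (xt + γ • (xhat - xt)) + h (xt + γ • (xhat - xt))) - (F xt + h xt) ≤
      (γ * η / 2) * ‖((1 - ρ) • yt + ρ • g) - gF xt‖ ^ 2 +
        γ * (γ * L / 2 + 2 / η - μ) * ‖xhat - xt‖ ^ 2 :=
  one_step_descent_bound_general L μ ρ γ η hρ0 hγ0 hγ1 hη F h fhat gF gfhat hFdiff hFLip hconv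
    hfdiff hfsc X hX xt xhat yt g hxtX hxhatX htangent hmin
end

section
/- Stationarity residual decomposition: suppose v + (1-ρ)y + (1-ρ)μ(x̂ - z) + ρ∇f̂(x̂) = 0 where f̂ has L̂-Lipschitz gradient, F has L-Lipschitz gradient, and y⁺ := (1-ρ)y + ρ∇f̂(z) with ∇f̂(z) = g (tangent condition at z). Then ‖v + ∇F(x̂)‖ ≤ (L + ρL̂ + (1-ρ)μ)‖x̂ - z‖ + ‖∇F(z) - y⁺‖. -/
theorem stationarity_residual_decomposition
    {n : ℕ} (L Lhat μ ρ : ℝ)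
    (hμ : 0 < μ) (hρ0 : 0 ≤ ρ) (hρ1 : ρ ≤ 1)
    (F fhat : EuclideanSpace ℝ (Fin n) → ℝ)
    (gF gfhat : EuclideanSpace ℝ (Fin n) → EuclideanSpace ℝ (Fin n))
    (hFdiff : ∀ x, HasGradientAt F (gF x) x)
    (hFLip : ∀ x y, ‖gF x - gF y‖ ≤ L * ‖x - y‖)
    (hfdiff : ∀ x, HasGradientAt fhat (gfhat x) x)
    (hfLip : ∀ x y, ‖gfhat x - gfhat y‖ ≤ Lhat * ‖x - y‖)
    (v y z xhat : EuclideanSpace ℝ (Fin n))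
    (hopt : v + (1 - ρ) • y + ((1 - ρ) * μ) • (xhat - z) + ρ • gfhat xhat = 0) :
    ‖v + gF xhat‖ ≤
      (L + ρ * Lhat + (1 - ρ) * μ) * ‖xhat - z‖ +
        ‖gF z - ((1 - ρ) • y + ρ • gfhat z)‖ := by
  have hv0 : v = -((1 - ρ) • y + ((1 - ρ) * μ) • (xhat - z) + ρ • gfhat xhat) := by
    have h : v + ((1 - ρ) • y + ((1 - ρ) * μ) • (xhat - z) + ρ • gfhat xhat) = 0 := by
      rw [← hopt]; abel
    exact eq_neg_of_add_eq_zero_left h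
  have hdecomp : v + gF xhat =
      (gF xhat - gF z) + ρ • (gfhat z - gfhat xhat) + ((1 - ρ) * μ) • (z - xhat)
        + (gF z - ((1 - ρ) • y + ρ • gfhat z)) := by
    rw [hv0]; module
  rw [hdecomp]
  have h1 : ‖gF xhat - gF z‖ ≤ L * ‖xhat - z‖ := hFLip xhat z
  have h2 : ‖ρ • (gfhat z - gfhat xhat)‖ ≤ ρ * Lhat * ‖xhat - z‖ := by
    rw [norm_smul, Real.norm_eq_abs, abs_of_nonneg hρ0]
    have := hfLip z xhat
    rw [norm_sub_rev z xhat] at this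
    nlinarith [norm_nonneg (gfhat z - gfhat xhat)]
  have h3 : ‖((1 - ρ) * μ) • (z - xhat)‖ = (1 - ρ) * μ * ‖xhat - z‖ := by
    rw [norm_smul, Real.norm_eq_abs, abs_of_nonneg (by nlinarith), norm_sub_rev]
  calc ‖(gF xhat - gF z) + ρ • (gfhat z - gfhat xhat) + ((1 - ρ) * μ) • (z - xhat)
        + (gF z - ((1 - ρ) • y + ρ • gfhat z))‖
      ≤ ‖(gF xhat - gF z) + ρ • (gfhat z - gfhat xhat) + ((1 - ρ) * μ) • (z - xhat)‖
        + ‖gF z - ((1 - ρ) • y + ρ • gfhat z)‖ := norm_add_le _ _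
    _ ≤ (‖gF xhat - gF z‖ + ‖ρ • (gfhat z - gfhat xhat)‖ + ‖((1 - ρ) * μ) • (z - xhat)‖)
        + ‖gF z - ((1 - ρ) • y + ρ • gfhat z)‖ := by
        gcongr
        exact norm_add₃_le
    _ ≤ (L + ρ * Lhat + (1 - ρ) * μ) * ‖xhat - z‖
        + ‖gF z - ((1 - ρ) • y + ρ • gfhat z)‖ := by
        rw [h3]; nlinarith [norm_nonneg (xhat - z)]
end
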